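/- arXiv:math/0102008 — 4 statements merged into one kernel-verified Lean document; each statement's English description precedes it below -/
import Mathlib

section
/- There exists a unique function ‖·‖_S : c₀₀ → ℝ which is a norm on c₀₀ and satisfies the implicit equation ‖x‖_S = max( ‖x‖_{ℓ∞}, sup{ (1/f(n)) Σ_{j=1}^n ‖E_j x‖_S : n ∈ ℕ, n ≥ 2, E₁ < ⋯ < E_n finite subsets of ℕ } ) for every x ∈ c₀₀; moreover, for this norm the unit vector basis (e_i) is 1-unconditional and 1-subsymmetric, i.e. ‖Σ_{i=1}^k λ_i e_{n_i}‖_S = ‖Σ_{i=1}^k θ_i λ_i e_{m_i}‖_S for all scalars (λ_i), all signs θ_i ∈ {−1, 1}, and all strictly increasing n₁ < ⋯ < n_k and m₁ < ⋯ < m_k in ℕ. -/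
open Finset Filter Topology

/-- `f(x) = log₂(x+1)`. -/
noncomputable def flog (x : ℝ) : ℝ := Real.logb 2 (x + 1)

/-- The `ℓ∞` (supremum) norm of a finitely supported sequence. -/
noncomputable def supNorm (x : ℕ →₀ ℝ) : ℝ := ⨆ i, |x i|

/-- `E(x)`: the coordinatewise restriction of `x` to the set `E`. -/
noncomputable def restr (E : Set ℕ) (x : ℕ →₀ ℝ) : ℕ →₀ ℝ :=
  haveI := Classical.decPred (· ∈ E)
  x.filter (· ∈ E)

/-- `E < F`: every element of `E` is smaller than every element of `F`. -/
def FinsetLt (E F : Finset ℕ) : Prop := ∀ i ∈ E, ∀ j ∈ F, i < j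

/-- The set of values `(1/f(n)) Σ_{j=1}^n N(E_j x)` over all `n ≥ 2` and all
successive finite sets `E₁ < ⋯ < E_n`. -/
def SImplicitSet (N : (ℕ →₀ ℝ) → ℝ) (x : ℕ →₀ ℝ) : Set ℝ :=
  { c | ∃ (n : ℕ) (E : ℕ → Finset ℕ), 2 ≤ n ∧
      (∀ i j, 1 ≤ i → i < j → j ≤ n → FinsetLt (E i) (E j)) ∧
      c = (flog n)⁻¹ * ∑ j ∈ Finset.Icc 1 n, N (restr ↑(E j) x) }

/-- `N` is a norm on `c₀₀` satisfying Schlumprecht's implicit equation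
`N x = max ( ‖x‖_∞ , sup { (1/f(n)) Σ N(E_j x) } )`. -/
def IsSNorm (N : (ℕ →₀ ℝ) → ℝ) : Prop :=
  (∀ x, 0 ≤ N x) ∧
  (∀ x y, N (x + y) ≤ N x + N y) ∧
  (∀ (a : ℝ) (x), N (a • x) = |a| * N x) ∧
  (∀ x, N x = 0 → x = 0) ∧
  (∀ x, N x = max (supNorm x) (sSup (SImplicitSet N x)))

-- flog facts
lemma one_lt_flog {n : ℕ} (hn : 2 ≤ n) : 1 < flog n := by
  have h2 : (2:ℝ) ≤ (n:ℝ) := by exact_mod_cast hn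
  have : (1:ℝ) = Real.logb 2 2 := by simp
  rw [flog, this]
  apply Real.logb_lt_logb one_lt_two (by norm_num)
  linarith

lemma flog_pos {n : ℕ} (hn : 2 ≤ n) : 0 < flog n := lt_trans one_pos (one_lt_flog hn)

lemma inv_flog_le_one {n : ℕ} (hn : 2 ≤ n) : (flog n)⁻¹ ≤ 1 := by
  rw [inv_le_one_iff₀]; right; exact le_of_lt (one_lt_flog hn)

lemma inv_flog_nonneg {n : ℕ} (hn : 2 ≤ n) : 0 ≤ (flog n)⁻¹ :=
  inv_nonneg.mpr (flog_pos hn).le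

lemma flog_le_flog {n : ℕ} (hn : 2 ≤ n) : flog 2 ≤ flog n := by
  have h2 : (2:ℝ) ≤ (n:ℝ) := by exact_mod_cast hn
  exact Real.logb_le_logb_of_le one_lt_two (by norm_num) (by linarith)

lemma inv_flog_le {n : ℕ} (hn : 2 ≤ n) : (flog n)⁻¹ ≤ (flog 2)⁻¹ := by
  apply inv_anti₀ (flog_pos le_rfl) (flog_le_flog hn)

lemma inv_flog_two_lt_one : (flog 2)⁻¹ < 1 := by
  rw [inv_lt_one_iff₀]; right; exact one_lt_flog le_rfl

-- restr facts
lemma restr_apply_pos {E : Set ℕ} {i : ℕ} (x : ℕ →₀ ℝ) (h : i ∈ E) : restr E x i = x i := by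
  classical
  unfold restr
  exact Finsupp.filter_apply_pos _ _ h

lemma restr_apply_neg {E : Set ℕ} {i : ℕ} (x : ℕ →₀ ℝ) (h : i ∉ E) : restr E x i = 0 := by
  classical
  unfold restr
  exact Finsupp.filter_apply_neg _ _ h

lemma restr_empty (x : ℕ →₀ ℝ) : restr (↑(∅ : Finset ℕ)) x = 0 := by
  ext i; rw [restr_apply_neg x (by simp)]; rfl

lemma restr_add (E : Set ℕ) (x y : ℕ →₀ ℝ) : restr E (x + y) = restr E x + restr E y := by
  ext i
  by_cases h : i ∈ E
  · simp [restr_apply_pos _ h]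
  · simp [restr_apply_neg _ h]

lemma restr_smul (E : Set ℕ) (a : ℝ) (x : ℕ →₀ ℝ) : restr E (a • x) = a • restr E x := by
  ext i
  by_cases h : i ∈ E
  · simp [restr_apply_pos _ h]
  · simp [restr_apply_neg _ h]

lemma restr_zero (E : Set ℕ) : restr E (0 : ℕ →₀ ℝ) = 0 := by
  ext i
  by_cases h : i ∈ E
  · simp [restr_apply_pos _ h]
  · simp [restr_apply_neg _ h]

lemma support_restr_subset (E : Set ℕ) (x : ℕ →₀ ℝ) : (restr E x).support ⊆ x.support := by
  intro i hi
  rw [Finsupp.mem_support_iff] at *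
  by_cases h : i ∈ E
  · rwa [restr_apply_pos _ h] at hi
  · rw [restr_apply_neg _ h] at hi; exact absurd rfl hi

lemma restr_eq_self (E : Set ℕ) (x : ℕ →₀ ℝ) (h : ∀ i, x i ≠ 0 → i ∈ E) : restr E x = x := by
  ext i
  by_cases hx : x i = 0
  · by_cases h2 : i ∈ E
    · rw [restr_apply_pos _ h2]
    · rw [restr_apply_neg _ h2, hx]
  · rw [restr_apply_pos _ (h i hx)]

lemma mem_support_restr {E : Set ℕ} {x : ℕ →₀ ℝ} {i : ℕ} :
    i ∈ (restr E x).support ↔ i ∈ x.support ∧ i ∈ E := by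
  constructor
  · intro hi
    refine ⟨support_restr_subset E x hi, ?_⟩
    by_contra h
    rw [Finsupp.mem_support_iff, restr_apply_neg _ h] at hi
    exact hi rfl
  · rintro ⟨h1, h2⟩
    rw [Finsupp.mem_support_iff, restr_apply_pos _ h2]
    exact Finsupp.mem_support_iff.mp h1

-- chunk 2: l1 and supNorm
noncomputable def l1 (x : ℕ →₀ ℝ) : ℝ := ∑ i ∈ x.support, |x i|

lemma l1_nonneg (x : ℕ →₀ ℝ) : 0 ≤ l1 x := Finset.sum_nonneg fun i _ => abs_nonneg _

lemma abs_le_l1 (x : ℕ →₀ ℝ) (i : ℕ) : |x i| ≤ l1 x := by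
  by_cases h : i ∈ x.support
  · exact Finset.single_le_sum (fun j _ => abs_nonneg (x j)) h
  · rw [Finsupp.notMem_support_iff] at h
    rw [h, abs_zero]; exact l1_nonneg x

lemma bddAbove_abs_range (x : ℕ →₀ ℝ) : BddAbove (Set.range fun i => |x i|) := by
  refine ⟨l1 x, ?_⟩
  rintro _ ⟨i, rfl⟩
  exact abs_le_l1 x i

lemma supNorm_nonneg (x : ℕ →₀ ℝ) : 0 ≤ supNorm x :=
  le_trans (abs_nonneg (x 0)) (le_ciSup (bddAbove_abs_range x) 0)

lemma abs_le_supNorm (x : ℕ →₀ ℝ) (i : ℕ) : |x i| ≤ supNorm x :=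
  le_ciSup (bddAbove_abs_range x) i

lemma supNorm_le (x : ℕ →₀ ℝ) {a : ℝ} (h : ∀ i, |x i| ≤ a) : supNorm x ≤ a :=
  ciSup_le h

lemma supNorm_le_l1 (x : ℕ →₀ ℝ) : supNorm x ≤ l1 x := supNorm_le x (abs_le_l1 x)

lemma supNorm_add (x y : ℕ →₀ ℝ) : supNorm (x + y) ≤ supNorm x + supNorm y := by
  apply supNorm_le
  intro i
  calc |(x+y) i| = |x i + y i| := by simp
    _ ≤ |x i| + |y i| := abs_add_le _ _
    _ ≤ supNorm x + supNorm y := add_le_add (abs_le_supNorm x i) (abs_le_supNorm y i)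

lemma supNorm_smul (a : ℝ) (x : ℕ →₀ ℝ) : supNorm (a • x) = |a| * supNorm x := by
  unfold supNorm
  rw [Real.mul_iSup_of_nonneg (abs_nonneg a)]
  congr 1; ext i
  simp [abs_mul]

lemma supNorm_eq_zero {x : ℕ →₀ ℝ} (h : supNorm x = 0) : x = 0 := by
  ext i
  have := abs_le_supNorm x i
  rw [h] at this
  have := abs_nonneg (x i)
  simp only [Finsupp.coe_zero, Pi.zero_apply]
  exact abs_eq_zero.mp (le_antisymm ‹|x i| ≤ 0› (abs_nonneg _))

lemma supNorm_pos {x : ℕ →₀ ℝ} (h : x ≠ 0) : 0 < supNorm x := by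
  rcases lt_or_eq_of_le (supNorm_nonneg x) with h1 | h1
  · exact h1
  · exact absurd (supNorm_eq_zero h1.symm) h

-- FinsetLt facts
lemma FinsetLt.disjoint {E F : Finset ℕ} (h : FinsetLt E F) : Disjoint E F := by
  rw [Finset.disjoint_left]
  intro a ha ha'
  exact lt_irrefl a (h a ha a ha')

-- l1 of restriction
lemma l1_restr (E : Finset ℕ) (x : ℕ →₀ ℝ) :
    l1 (restr ↑E x) = ∑ i ∈ x.support ∩ E, |x i| := by
  classical
  rw [l1, Finset.sum_subset (support_restr_subset ↑E x)]
  · rw [← Finset.sum_filter_add_sum_filter_not x.support (· ∈ E) (fun i => |restr ↑E x i|)]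
    have h1 : ∀ i ∈ x.support.filter (· ∈ E), |restr ↑E x i| = |x i| := by
      intro i hi
      rw [Finset.mem_filter] at hi
      rw [restr_apply_pos x (by exact_mod_cast hi.2)]
    have h2 : ∀ i ∈ x.support.filter (¬ · ∈ E), |restr ↑E x i| = 0 := by
      intro i hi
      rw [Finset.mem_filter] at hi
      rw [restr_apply_neg x (by exact_mod_cast hi.2), abs_zero]
    rw [Finset.sum_congr rfl h1, Finset.sum_congr rfl h2, Finset.sum_const_zero, add_zero,
      Finset.filter_mem_eq_inter]
  · intro i _ hi
    rw [Finsupp.notMem_support_iff] at hi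
    rw [hi, abs_zero]

lemma l1_restr_le (E : Finset ℕ) (x : ℕ →₀ ℝ) : l1 (restr ↑E x) ≤ l1 x := by
  rw [l1_restr]
  exact Finset.sum_le_sum_of_subset_of_nonneg (Finset.inter_subset_left)
    (fun i _ _ => abs_nonneg _)

-- key disjointness bound
lemma sum_l1_restr_le {n : ℕ} (E : ℕ → Finset ℕ) (x : ℕ →₀ ℝ)
    (hE : ∀ i j, 1 ≤ i → i < j → j ≤ n → FinsetLt (E i) (E j)) :
    ∑ j ∈ Finset.Icc 1 n, l1 (restr ↑(E j) x) ≤ l1 x := by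
  classical
  have key : ∀ i ∈ x.support, ∑ j ∈ Finset.Icc 1 n, (if i ∈ E j then |x i| else 0) ≤ |x i| := by
    intro i _
    rw [← Finset.sum_filter]
    rw [Finset.sum_const]
    have hcard : ((Finset.Icc 1 n).filter (fun j => i ∈ E j)).card ≤ 1 := by
      rw [Finset.card_le_one]
      intro a ha b hb
      rw [Finset.mem_filter, Finset.mem_Icc] at ha hb
      by_contra hne
      rcases lt_or_gt_of_ne hne with h | h
      · exact lt_irrefl i (hE a b ha.1.1 h hb.1.2 i ha.2 i hb.2)
      · exact lt_irrefl i (hE b a hb.1.1 h ha.1.2 i hb.2 i ha.2)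
    calc ((Finset.Icc 1 n).filter (fun j => i ∈ E j)).card • |x i|
        = ((Finset.Icc 1 n).filter (fun j => i ∈ E j)).card * |x i| := by
          rw [nsmul_eq_mul]
      _ ≤ 1 * |x i| := by
          apply mul_le_mul_of_nonneg_right _ (abs_nonneg _)
          exact_mod_cast hcard
      _ = |x i| := one_mul _
  calc ∑ j ∈ Finset.Icc 1 n, l1 (restr ↑(E j) x)
      = ∑ j ∈ Finset.Icc 1 n, ∑ i ∈ x.support, (if i ∈ E j then |x i| else 0) := by
        apply Finset.sum_congr rfl
        intro j _
        rw [l1_restr, ← Finset.sum_filter, Finset.filter_mem_eq_inter]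
    _ = ∑ i ∈ x.support, ∑ j ∈ Finset.Icc 1 n, (if i ∈ E j then |x i| else 0) := by
        rw [Finset.sum_comm]
    _ ≤ ∑ i ∈ x.support, |x i| := Finset.sum_le_sum key
    _ = l1 x := rfl

lemma zero_mem_SImplicitSet {N : (ℕ →₀ ℝ) → ℝ} (hN0 : N 0 = 0) (x : ℕ →₀ ℝ) :
    0 ∈ SImplicitSet N x := by
  refine ⟨2, fun _ => ∅, le_rfl, fun i j _ _ _ => by simp [FinsetLt], ?_⟩
  have : ∀ j ∈ Finset.Icc 1 2, N (restr ↑((fun _ => (∅ : Finset ℕ)) j) x) = 0 := by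
    intro j _
    rw [restr_empty, hN0]
  rw [Finset.sum_congr rfl this, Finset.sum_const_zero, mul_zero]

lemma SImplicitSet_le_l1 {N : (ℕ →₀ ℝ) → ℝ} (hN : ∀ y, N y ≤ l1 y)
    (hN0 : ∀ y, 0 ≤ N y) (x : ℕ →₀ ℝ) : ∀ c ∈ SImplicitSet N x, c ≤ l1 x := by
  rintro c ⟨n, E, hn, hE, rfl⟩
  have h1 : ∑ j ∈ Finset.Icc 1 n, N (restr ↑(E j) x) ≤ l1 x :=
    le_trans (Finset.sum_le_sum fun j _ => hN _) (sum_l1_restr_le E x hE)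
  calc (flog n)⁻¹ * ∑ j ∈ Finset.Icc 1 n, N (restr ↑(E j) x)
      ≤ (flog n)⁻¹ * l1 x := mul_le_mul_of_nonneg_left h1 (inv_flog_nonneg hn)
    _ ≤ 1 * l1 x := mul_le_mul_of_nonneg_right (inv_flog_le_one hn) (l1_nonneg x)
    _ = l1 x := one_mul _

lemma bddAbove_SImplicitSet {N : (ℕ →₀ ℝ) → ℝ} (hN : ∀ y, N y ≤ l1 y)
    (hN0 : ∀ y, 0 ≤ N y) (x : ℕ →₀ ℝ) : BddAbove (SImplicitSet N x) :=
  ⟨l1 x, fun c hc => SImplicitSet_le_l1 hN hN0 x c hc⟩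

noncomputable def Phi (N : (ℕ →₀ ℝ) → ℝ) (x : ℕ →₀ ℝ) : ℝ :=
  max (supNorm x) (sSup (SImplicitSet N x))

def Good (N : (ℕ →₀ ℝ) → ℝ) : Prop :=
  (∀ x, supNorm x ≤ N x) ∧ (∀ x, N x ≤ l1 x) ∧
  (∀ x y, N (x + y) ≤ N x + N y) ∧ (∀ (a : ℝ) x, N (a • x) = |a| * N x)

lemma Good.nonneg {N} (h : Good N) (x) : 0 ≤ N x := le_trans (supNorm_nonneg x) (h.1 x)

lemma Good.zero {N} (h : Good N) : N 0 = 0 := by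
  have := h.2.2.2 0 0
  rwa [zero_smul, abs_zero, zero_mul] at this

lemma Good.sSup_nonneg {N} (h : Good N) (x) : 0 ≤ sSup (SImplicitSet N x) :=
  le_csSup (bddAbove_SImplicitSet h.2.1 h.nonneg x) (zero_mem_SImplicitSet h.zero x)

lemma good_supNorm : Good supNorm :=
  ⟨fun _ => le_rfl, supNorm_le_l1, supNorm_add, supNorm_smul⟩

lemma sSup_SImplicitSet_mono {N M : (ℕ →₀ ℝ) → ℝ} (h : ∀ y, N y ≤ M y) (hM : Good M)
    (x : ℕ →₀ ℝ) : sSup (SImplicitSet N x) ≤ sSup (SImplicitSet M x) := by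
  apply Real.sSup_le _ (hM.sSup_nonneg x)
  rintro c ⟨n, E, hn, hE, rfl⟩
  have hmem : (flog n)⁻¹ * ∑ j ∈ Finset.Icc 1 n, M (restr ↑(E j) x) ∈ SImplicitSet M x :=
    ⟨n, E, hn, hE, rfl⟩
  calc (flog n)⁻¹ * ∑ j ∈ Finset.Icc 1 n, N (restr ↑(E j) x)
      ≤ (flog n)⁻¹ * ∑ j ∈ Finset.Icc 1 n, M (restr ↑(E j) x) :=
        mul_le_mul_of_nonneg_left (Finset.sum_le_sum fun j _ => h _) (inv_flog_nonneg hn)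
    _ ≤ sSup (SImplicitSet M x) := le_csSup (bddAbove_SImplicitSet hM.2.1 hM.nonneg x) hmem

lemma Phi_mono {N M : (ℕ →₀ ℝ) → ℝ} (h : ∀ y, N y ≤ M y) (hM : Good M) (x : ℕ →₀ ℝ) :
    Phi N x ≤ Phi M x :=
  max_le_max le_rfl (sSup_SImplicitSet_mono h hM x)

lemma sSup_SImplicitSet_zero {N} (hGood : Good N) : sSup (SImplicitSet N 0) = 0 := by
  apply le_antisymm
  · apply Real.sSup_le _ le_rfl
    rintro c ⟨n, E, hn, hE, rfl⟩
    have : ∀ j ∈ Finset.Icc 1 n, N (restr ↑(E j) (0 : ℕ →₀ ℝ)) = 0 := by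
      intro j _; rw [restr_zero, hGood.zero]
    rw [Finset.sum_congr rfl this, Finset.sum_const_zero, mul_zero]
  · exact hGood.sSup_nonneg 0

lemma sSup_SImplicitSet_smul_le {N} (hGood : Good N) (a : ℝ) (x : ℕ →₀ ℝ) :
    sSup (SImplicitSet N (a • x)) ≤ |a| * sSup (SImplicitSet N x) := by
  apply Real.sSup_le _ (mul_nonneg (abs_nonneg a) (hGood.sSup_nonneg x))
  rintro c ⟨n, E, hn, hE, rfl⟩
  have heq : ∀ j ∈ Finset.Icc 1 n, N (restr ↑(E j) (a • x)) = |a| * N (restr ↑(E j) x) := by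
    intro j _
    rw [restr_smul, hGood.2.2.2]
  rw [Finset.sum_congr rfl heq, ← Finset.mul_sum]
  have hmem : (flog n)⁻¹ * ∑ j ∈ Finset.Icc 1 n, N (restr ↑(E j) x) ∈ SImplicitSet N x :=
    ⟨n, E, hn, hE, rfl⟩
  calc (flog n)⁻¹ * (|a| * ∑ j ∈ Finset.Icc 1 n, N (restr ↑(E j) x))
      = |a| * ((flog n)⁻¹ * ∑ j ∈ Finset.Icc 1 n, N (restr ↑(E j) x)) := by ring
    _ ≤ |a| * sSup (SImplicitSet N x) := by
        apply mul_le_mul_of_nonneg_left _ (abs_nonneg a)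
        exact le_csSup (bddAbove_SImplicitSet hGood.2.1 hGood.nonneg x) hmem

lemma sSup_SImplicitSet_smul {N} (hGood : Good N) (a : ℝ) (x : ℕ →₀ ℝ) :
    sSup (SImplicitSet N (a • x)) = |a| * sSup (SImplicitSet N x) := by
  rcases eq_or_ne a 0 with rfl | ha
  · rw [zero_smul, abs_zero, zero_mul, sSup_SImplicitSet_zero hGood]
  · apply le_antisymm (sSup_SImplicitSet_smul_le hGood a x)
    have h2 := sSup_SImplicitSet_smul_le hGood a⁻¹ (a • x)
    rw [smul_smul, inv_mul_cancel₀ ha, one_smul] at h2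
    have haa : |a| * |a⁻¹| = 1 := by
      rw [← abs_mul, mul_inv_cancel₀ ha, abs_one]
    calc |a| * sSup (SImplicitSet N x)
        ≤ |a| * (|a⁻¹| * sSup (SImplicitSet N (a • x))) :=
          mul_le_mul_of_nonneg_left h2 (abs_nonneg a)
      _ = (|a| * |a⁻¹|) * sSup (SImplicitSet N (a • x)) := by ring
      _ = sSup (SImplicitSet N (a • x)) := by rw [haa, one_mul]

lemma good_Phi {N} (hGood : Good N) : Good (Phi N) := by
  refine ⟨fun x => le_max_left _ _, ?_, ?_, ?_⟩
  · intro x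
    exact max_le (supNorm_le_l1 x)
      (Real.sSup_le (SImplicitSet_le_l1 hGood.2.1 hGood.nonneg x) (l1_nonneg x))
  · intro x y
    have h1 : supNorm x + supNorm y ≤ Phi N x + Phi N y :=
      add_le_add (le_max_left _ _) (le_max_left _ _)
    apply max_le (le_trans (supNorm_add x y) h1)
    apply Real.sSup_le _ (le_trans (add_nonneg (supNorm_nonneg x) (supNorm_nonneg y)) h1)
    rintro c ⟨n, E, hn, hE, rfl⟩
    have hsplit : ∀ j ∈ Finset.Icc 1 n,
        N (restr ↑(E j) (x + y)) ≤ N (restr ↑(E j) x) + N (restr ↑(E j) y) := by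
      intro j _
      rw [restr_add]
      exact hGood.2.2.1 _ _
    have hx : (flog n)⁻¹ * ∑ j ∈ Finset.Icc 1 n, N (restr ↑(E j) x) ≤ Phi N x :=
      le_trans (le_csSup (bddAbove_SImplicitSet hGood.2.1 hGood.nonneg x) ⟨n, E, hn, hE, rfl⟩)
        (le_max_right _ _)
    have hy : (flog n)⁻¹ * ∑ j ∈ Finset.Icc 1 n, N (restr ↑(E j) y) ≤ Phi N y :=
      le_trans (le_csSup (bddAbove_SImplicitSet hGood.2.1 hGood.nonneg y) ⟨n, E, hn, hE, rfl⟩)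
        (le_max_right _ _)
    calc (flog n)⁻¹ * ∑ j ∈ Finset.Icc 1 n, N (restr ↑(E j) (x + y))
        ≤ (flog n)⁻¹ * ∑ j ∈ Finset.Icc 1 n, (N (restr ↑(E j) x) + N (restr ↑(E j) y)) :=
          mul_le_mul_of_nonneg_left (Finset.sum_le_sum hsplit) (inv_flog_nonneg hn)
      _ = (flog n)⁻¹ * ∑ j ∈ Finset.Icc 1 n, N (restr ↑(E j) x)
          + (flog n)⁻¹ * ∑ j ∈ Finset.Icc 1 n, N (restr ↑(E j) y) := by
          rw [Finset.sum_add_distrib]; ring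
      _ ≤ Phi N x + Phi N y := add_le_add hx hy
  · intro a x
    unfold Phi
    rw [supNorm_smul, sSup_SImplicitSet_smul hGood, ← mul_max_of_nonneg _ _ (abs_nonneg a)]

noncomputable def seqN : ℕ → (ℕ →₀ ℝ) → ℝ
  | 0 => supNorm
  | k+1 => Phi (seqN k)

lemma good_seqN : ∀ k, Good (seqN k)
  | 0 => good_supNorm
  | k+1 => good_Phi (good_seqN k)

lemma seqN_mono_succ : ∀ k x, seqN k x ≤ seqN (k+1) x
  | 0, x => le_max_left _ _
  | k+1, x => Phi_mono (seqN_mono_succ k) (good_seqN (k+1)) x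

lemma seqN_mono (x : ℕ →₀ ℝ) : Monotone fun k => seqN k x :=
  monotone_nat_of_le_succ fun k => seqN_mono_succ k x

lemma seqN_bdd (x : ℕ →₀ ℝ) : BddAbove (Set.range fun k => seqN k x) := by
  refine ⟨l1 x, ?_⟩
  rintro _ ⟨k, rfl⟩
  exact (good_seqN k).2.1 x

noncomputable def Snorm (x : ℕ →₀ ℝ) : ℝ := ⨆ k, seqN k x

lemma seqN_le_Snorm (k : ℕ) (x : ℕ →₀ ℝ) : seqN k x ≤ Snorm x :=
  le_ciSup (seqN_bdd x) k

lemma good_Snorm : Good Snorm := by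
  refine ⟨fun x => seqN_le_Snorm 0 x, fun x => ciSup_le fun k => (good_seqN k).2.1 x, ?_, ?_⟩
  · intro x y
    apply ciSup_le
    intro k
    exact le_trans ((good_seqN k).2.2.1 x y)
      (add_le_add (seqN_le_Snorm k x) (seqN_le_Snorm k y))
  · intro a x
    unfold Snorm
    rw [Real.mul_iSup_of_nonneg (abs_nonneg a)]
    congr 1; ext k
    exact (good_seqN k).2.2.2 a x

lemma tendsto_seqN (x : ℕ →₀ ℝ) :
    Tendsto (fun k => seqN k x) atTop (𝓝 (Snorm x)) :=
  tendsto_atTop_ciSup (seqN_mono x) (seqN_bdd x)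

lemma Snorm_fixed (x : ℕ →₀ ℝ) : Snorm x = Phi Snorm x := by
  apply le_antisymm
  · apply ciSup_le
    intro k
    calc seqN k x ≤ seqN (k+1) x := seqN_mono_succ k x
      _ = Phi (seqN k) x := rfl
      _ ≤ Phi Snorm x := Phi_mono (fun y => seqN_le_Snorm k y) good_Snorm x
  · apply max_le (good_Snorm.1 x)
    apply Real.sSup_le _ (good_Snorm.nonneg x)
    rintro c ⟨n, E, hn, hE, rfl⟩
    have hlim : Tendsto (fun k => (flog n)⁻¹ * ∑ j ∈ Finset.Icc 1 n, seqN k (restr ↑(E j) x))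
        atTop (𝓝 ((flog n)⁻¹ * ∑ j ∈ Finset.Icc 1 n, Snorm (restr ↑(E j) x))) := by
      apply Tendsto.const_mul
      exact tendsto_finset_sum _ fun j _ => tendsto_seqN _
    apply le_of_tendsto hlim
    filter_upwards with k
    calc (flog n)⁻¹ * ∑ j ∈ Finset.Icc 1 n, seqN k (restr ↑(E j) x)
        ≤ sSup (SImplicitSet (seqN k) x) :=
          le_csSup (bddAbove_SImplicitSet (good_seqN k).2.1 (good_seqN k).nonneg x)
            ⟨n, E, hn, hE, rfl⟩
      _ ≤ seqN (k+1) x := le_max_right _ _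
      _ ≤ Snorm x := seqN_le_Snorm (k+1) x

lemma isSNorm_Snorm : IsSNorm Snorm := by
  refine ⟨good_Snorm.nonneg, good_Snorm.2.2.1, fun a x => good_Snorm.2.2.2 a x, ?_,
    Snorm_fixed⟩
  intro x hx
  apply supNorm_eq_zero
  exact le_antisymm (hx ▸ good_Snorm.1 x) (supNorm_nonneg x)

lemma IsSNorm.zero {N} (h : IsSNorm N) : N 0 = 0 := by
  have := h.2.2.1 0 0
  rwa [zero_smul, abs_zero, zero_mul] at this

lemma IsSNorm.ge_supNorm {N} (h : IsSNorm N) (x) : supNorm x ≤ N x :=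
  (h.2.2.2.2 x) ▸ le_max_left _ _

lemma IsSNorm.sSup_le_self {N} (h : IsSNorm N) (x) : sSup (SImplicitSet N x) ≤ N x :=
  (h.2.2.2.2 x) ▸ le_max_right _ _

-- if the restriction is not all of x, its support is strictly smaller
lemma restr_supp_subset_set {E : Set ℕ} {x : ℕ →₀ ℝ} {i : ℕ}
    (hi : i ∈ (restr E x).support) : i ∈ E := by
  by_contra h
  rw [Finsupp.mem_support_iff, restr_apply_neg _ h] at hi
  exact hi rfl

lemma restr_proper_card {E : Set ℕ} {x : ℕ →₀ ℝ} (h : restr E x ≠ x) :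
    (restr E x).support.card < x.support.card := by
  apply Finset.card_lt_card
  refine ⟨support_restr_subset E x, ?_⟩
  intro hsub
  apply h
  apply restr_eq_self
  intro i hxi
  exact restr_supp_subset_set (hsub (Finsupp.mem_support_iff.mpr hxi))

-- if one piece is all of x (x ≠ 0), the other pieces vanish and the sum is N x
lemma sum_restr_full {N : (ℕ →₀ ℝ) → ℝ} (hN0 : N 0 = 0) {x : ℕ →₀ ℝ} {n : ℕ}
    {E : ℕ → Finset ℕ} (hE : ∀ i j, 1 ≤ i → i < j → j ≤ n → FinsetLt (E i) (E j))
    {j0 : ℕ} (hj0 : j0 ∈ Finset.Icc 1 n) (hfull : restr ↑(E j0) x = x) :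
    ∑ j ∈ Finset.Icc 1 n, N (restr ↑(E j) x) = N x := by
  rw [Finset.sum_eq_single_of_mem j0 hj0, hfull]
  intro j hj hne
  have hsupp : (x.support : Set ℕ) ⊆ ↑(E j0) := by
    intro i hi
    rw [Finset.mem_coe, Finsupp.mem_support_iff] at hi
    have : restr ↑(E j0) x i = x i := by rw [hfull]
    by_contra hc
    rw [restr_apply_neg x hc] at this
    exact hi this.symm
  have hdisj : Disjoint (E j) (E j0) := by
    rw [Finset.mem_Icc] at hj hj0
    rcases lt_or_gt_of_ne hne with h | h
    · exact (FinsetLt.disjoint (hE j j0 hj.1 h hj0.2))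
    · exact (FinsetLt.disjoint (hE j0 j hj0.1 h hj.2)).symm
  have : restr ↑(E j) x = 0 := by
    ext i
    by_cases hiE : i ∈ (↑(E j) : Set ℕ)
    · rw [restr_apply_pos x hiE]
      by_contra hxi
      have hi0 : i ∈ E j0 := hsupp (by rw [Finset.mem_coe, Finsupp.mem_support_iff]; exact hxi)
      exact Finset.disjoint_left.mp hdisj hiE hi0
    · rw [restr_apply_neg x hiE]; rfl
  rw [this, hN0]

lemma IsSNorm.le_l1 {N} (h : IsSNorm N) : ∀ x, N x ≤ l1 x := by
  have hq : (flog 2)⁻¹ < 1 := inv_flog_two_lt_one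
  have hq0 : 0 ≤ (flog 2)⁻¹ := inv_flog_nonneg le_rfl
  suffices hkey : ∀ k x, x.support.card = k → N x ≤ l1 x by
    intro x; exact hkey _ x rfl
  intro k
  induction k using Nat.strong_induction_on with
  | _ k IH =>
  intro x hcard
  subst hcard
  rcases eq_or_ne x 0 with rfl | hx
  · rw [h.zero]; exact l1_nonneg 0
  · set q := (flog 2)⁻¹ with hqdef
    have hclaim : ∀ c ∈ SImplicitSet N x, c ≤ max (q * l1 x) (q * N x) := by
      rintro c ⟨n, E, hn, hE, rfl⟩
      by_cases hfull : ∃ j0 ∈ Finset.Icc 1 n, restr ↑(E j0) x = x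
      · obtain ⟨j0, hj0, hfull⟩ := hfull
        rw [sum_restr_full h.zero hE hj0 hfull]
        refine le_trans ?_ (le_max_right _ _)
        exact mul_le_mul_of_nonneg_right (inv_flog_le hn) (h.1 x)
      · push_neg at hfull
        have hsum : ∑ j ∈ Finset.Icc 1 n, N (restr ↑(E j) x) ≤ l1 x := by
          refine le_trans (Finset.sum_le_sum fun j hj => ?_) (sum_l1_restr_le E x hE)
          exact IH _ (restr_proper_card (hfull j hj)) _ rfl
        refine le_trans ?_ (le_max_left _ _)
        calc (flog n)⁻¹ * ∑ j ∈ Finset.Icc 1 n, N (restr ↑(E j) x)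
            ≤ (flog n)⁻¹ * l1 x := by
              apply mul_le_mul_of_nonneg_left hsum (inv_flog_nonneg hn)
          _ ≤ q * l1 x := mul_le_mul_of_nonneg_right (inv_flog_le hn) (l1_nonneg x)
    have hb : N x ≤ max (supNorm x) (max (q * l1 x) (q * N x)) := by
      conv_lhs => rw [h.2.2.2.2 x]
      apply max_le_max le_rfl
      apply Real.sSup_le hclaim
      exact le_trans (mul_nonneg hq0 (l1_nonneg x)) (le_max_left _ _)
    have hb2 : N x ≤ max (l1 x) (q * N x) := by
      apply le_trans hb
      apply max_le
      · exact le_trans (supNorm_le_l1 x) (le_max_left _ _)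
      · apply max_le _ (le_max_right _ _)
        refine le_trans ?_ (le_max_left _ _)
        nlinarith [l1_nonneg x]
    rcases le_max_iff.mp hb2 with h1 | h1
    · exact h1
    · nlinarith [h.1 x, l1_nonneg x]

lemma IsSNorm.bddAbove {N} (h : IsSNorm N) (x) : BddAbove (SImplicitSet N x) :=
  bddAbove_SImplicitSet h.le_l1 h.1 x

/-- The restricted implicit set: only decompositions with all pieces proper. -/
def Tset (N : (ℕ →₀ ℝ) → ℝ) (x : ℕ →₀ ℝ) : Set ℝ :=
  { c | ∃ (n : ℕ) (E : ℕ → Finset ℕ), 2 ≤ n ∧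
      (∀ i j, 1 ≤ i → i < j → j ≤ n → FinsetLt (E i) (E j)) ∧
      (∀ j ∈ Finset.Icc 1 n, restr ↑(E j) x ≠ x) ∧
      c = (flog n)⁻¹ * ∑ j ∈ Finset.Icc 1 n, N (restr ↑(E j) x) }

lemma Tset_subset {N x} : Tset N x ⊆ SImplicitSet N x := by
  rintro c ⟨n, E, hn, hE, _, rfl⟩
  exact ⟨n, E, hn, hE, rfl⟩

lemma zero_mem_Tset {N : (ℕ →₀ ℝ) → ℝ} (hN0 : N 0 = 0) {x : ℕ →₀ ℝ} (hx : x ≠ 0) :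
    0 ∈ Tset N x := by
  refine ⟨2, fun _ => ∅, le_rfl, fun i j _ _ _ => by simp [FinsetLt], ?_, ?_⟩
  · intro j _
    rw [restr_empty]
    exact fun hc => hx hc.symm
  · have : ∀ j ∈ Finset.Icc 1 2, N (restr ↑((fun _ => (∅ : Finset ℕ)) j) x) = 0 := by
      intro j _
      rw [restr_empty, hN0]
    rw [Finset.sum_congr rfl this, Finset.sum_const_zero, mul_zero]

/-- Key recursion: for nonzero `x`, the implicit equation only needs proper pieces. -/
lemma IsSNorm.eq_Tset {N} (h : IsSNorm N) {x : ℕ →₀ ℝ} (hx : x ≠ 0) :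
    N x = max (supNorm x) (sSup (Tset N x)) := by
  have hbddS := h.bddAbove x
  have hT0 : 0 ∈ Tset N x := zero_mem_Tset h.zero hx
  have hbddT : BddAbove (Tset N x) := hbddS.mono Tset_subset
  have hNpos : 0 < N x := lt_of_lt_of_le (supNorm_pos hx) (h.ge_supNorm x)
  apply le_antisymm
  · -- N x ≤ max supNorm (sSup T)
    set R := max (supNorm x) (sSup (Tset N x)) with hR
    have hR0 : 0 ≤ R := le_trans (supNorm_nonneg x) (le_max_left _ _)
    have hclaim : ∀ c ∈ SImplicitSet N x, c ≤ max R ((flog 2)⁻¹ * N x) := by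
      rintro c ⟨n, E, hn, hE, rfl⟩
      by_cases hfull : ∃ j0 ∈ Finset.Icc 1 n, restr ↑(E j0) x = x
      · obtain ⟨j0, hj0, hfull⟩ := hfull
        rw [sum_restr_full h.zero hE hj0 hfull]
        refine le_trans ?_ (le_max_right _ _)
        exact mul_le_mul_of_nonneg_right (inv_flog_le hn) (h.1 x)
      · push_neg at hfull
        refine le_trans (le_trans (le_csSup hbddT ⟨n, E, hn, hE, hfull, rfl⟩)
          (le_max_right (supNorm x) _)) (le_max_left _ _)
    have hb : N x ≤ max R ((flog 2)⁻¹ * N x) := by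
      conv_lhs => rw [h.2.2.2.2 x]
      apply max_le _ (Real.sSup_le hclaim (le_trans hR0 (le_max_left _ _)))
      exact le_trans (le_max_left _ (sSup (Tset N x))) (le_max_left _ _)
    rcases le_max_iff.mp hb with h1 | h1
    · exact h1
    · nlinarith [inv_flog_two_lt_one]
  · apply max_le (h.ge_supNorm x)
    exact le_trans (csSup_le_csSup hbddS ⟨0, hT0⟩ Tset_subset) (h.sSup_le_self x)

/-- Uniqueness of the Schlumprecht norm. -/
lemma isSNorm_unique {N M : (ℕ →₀ ℝ) → ℝ} (hN : IsSNorm N) (hM : IsSNorm M) : N = M := by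
  funext x
  suffices hkey : ∀ k x, x.support.card = k → N x = M x by
    exact hkey _ x rfl
  intro k
  induction k using Nat.strong_induction_on with
  | _ k IH =>
  intro x hcard
  subst hcard
  rcases eq_or_ne x 0 with rfl | hx
  · rw [hN.zero, hM.zero]
  · rw [hN.eq_Tset hx, hM.eq_Tset hx]
    congr 2
    unfold Tset
    ext c
    constructor
    · rintro ⟨n, E, hn, hE, hprop, rfl⟩
      refine ⟨n, E, hn, hE, hprop, ?_⟩
      congr 1
      apply Finset.sum_congr rfl
      intro j hj
      exact IH _ (restr_proper_card (hprop j hj)) _ rfl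
    · rintro ⟨n, E, hn, hE, hprop, rfl⟩
      refine ⟨n, E, hn, hE, hprop, ?_⟩
      congr 1
      apply Finset.sum_congr rfl
      intro j hj
      exact (IH _ (restr_proper_card (hprop j hj)) _ rfl).symm

-- chunk 5: sign invariance
noncomputable def emul (ε : ℕ → ℝ) (x : ℕ →₀ ℝ) : ℕ →₀ ℝ :=
  haveI := Classical.dec
  ⟨x.support.filter (fun i => ε i * x i ≠ 0), fun i => ε i * x i, by
    intro i
    constructor
    · intro hi
      exact (Finset.mem_filter.mp hi).2
    · intro hi
      refine Finset.mem_filter.mpr ⟨?_, hi⟩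
      rw [Finsupp.mem_support_iff]
      intro hx
      exact hi (by show ε i * x i = 0; rw [hx, mul_zero])⟩

lemma emul_apply (ε : ℕ → ℝ) (x : ℕ →₀ ℝ) (i : ℕ) : emul ε x i = ε i * x i := rfl

section Sign
variable {ε : ℕ → ℝ} (hε : ∀ i, ε i = 1 ∨ ε i = -1)
include hε

lemma abs_eps (i : ℕ) : |ε i| = 1 := by rcases hε i with h | h <;> rw [h] <;> simp

lemma eps_sq (i : ℕ) : ε i * ε i = 1 := by rcases hε i with h | h <;> rw [h] <;> norm_num

lemma emul_emul (x : ℕ →₀ ℝ) : emul ε (emul ε x) = x := by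
  ext i
  rw [emul_apply, emul_apply, ← mul_assoc, eps_sq hε, one_mul]

lemma emul_inj : Function.Injective (emul ε) := by
  intro x y hxy
  rw [← emul_emul hε x, ← emul_emul hε y, hxy]

lemma supNorm_emul (x : ℕ →₀ ℝ) : supNorm (emul ε x) = supNorm x := by
  unfold supNorm
  congr 1; ext i
  rw [emul_apply, abs_mul, abs_eps hε, one_mul]

lemma support_emul (x : ℕ →₀ ℝ) : (emul ε x).support = x.support := by
  ext i
  rw [Finsupp.mem_support_iff, Finsupp.mem_support_iff, emul_apply]
  constructor
  · intro h hx
    exact h (by rw [hx, mul_zero])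
  · intro h hc
    rcases mul_eq_zero.mp hc with h1 | h1
    · rcases hε i with he | he <;> rw [he] at h1 <;> norm_num at h1
    · exact h h1

omit hε in
lemma restr_emul (E : Set ℕ) (x : ℕ →₀ ℝ) : restr E (emul ε x) = emul ε (restr E x) := by
  ext i
  by_cases h : i ∈ E
  · rw [restr_apply_pos _ h, emul_apply, emul_apply, restr_apply_pos _ h]
  · rw [restr_apply_neg _ h, emul_apply, restr_apply_neg _ h, mul_zero]

lemma IsSNorm.emul_eq {N : (ℕ →₀ ℝ) → ℝ} (h : IsSNorm N) (x : ℕ →₀ ℝ) :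
    N (emul ε x) = N x := by
  suffices hkey : ∀ k x, (x : ℕ →₀ ℝ).support.card = k → N (emul ε x) = N x by
    exact hkey _ x rfl
  intro k
  induction k using Nat.strong_induction_on with
  | _ k IH =>
  intro x hcard
  subst hcard
  rcases eq_or_ne x 0 with rfl | hx
  · have : emul ε (0 : ℕ →₀ ℝ) = 0 := by ext i; rw [emul_apply]; simp
    rw [this]
  · have hex : emul ε x ≠ 0 := by
      intro hc
      apply hx
      rw [← emul_emul hε x, hc]
      ext i; rw [emul_apply]; simp
    rw [h.eq_Tset hex, h.eq_Tset hx, supNorm_emul hε]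
    congr 2
    unfold Tset
    ext c
    have hcorr : ∀ (E : Finset ℕ), restr ↑E (emul ε x) = emul ε (restr ↑E x) :=
      fun E => restr_emul ↑E x
    have hprop_iff : ∀ (E : Finset ℕ), (restr ↑E (emul ε x) ≠ emul ε x ↔ restr ↑E x ≠ x) := by
      intro E
      rw [hcorr E]
      constructor
      · intro hne hc; exact hne (by rw [hc])
      · intro hne hc; exact hne (emul_inj hε hc)
    have hval : ∀ (E : Finset ℕ), restr ↑E x ≠ x →
        N (restr ↑E (emul ε x)) = N (restr ↑E x) := by
      intro E hne
      rw [hcorr E]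
      have hlt : (restr ↑E x).support.card < x.support.card := restr_proper_card hne
      exact IH _ hlt _ rfl
    constructor
    · rintro ⟨n, E, hn, hE, hprop, rfl⟩
      refine ⟨n, E, hn, hE, fun j hj => (hprop_iff (E j)).mp (hprop j hj), ?_⟩
      congr 1
      apply Finset.sum_congr rfl
      intro j hj
      exact hval (E j) ((hprop_iff (E j)).mp (hprop j hj))
    · rintro ⟨n, E, hn, hE, hprop, rfl⟩
      refine ⟨n, E, hn, hE, fun j hj => (hprop_iff (E j)).mpr (hprop j hj), ?_⟩
      congr 1
      apply Finset.sum_congr rfl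
      intro j hj
      exact (hval (E j) (hprop j hj)).symm

end Sign

-- chunk 6: spreading invariance
section Spread
variable {σ : ℕ → ℕ} (hσ : StrictMono σ)

lemma supNorm_embDomain (hσ : StrictMono σ) (x : ℕ →₀ ℝ) :
    supNorm (Finsupp.embDomain ⟨σ, hσ.injective⟩ x) = supNorm x := by
  set emb : ℕ ↪ ℕ := ⟨σ, hσ.injective⟩
  unfold supNorm
  apply congrArg sSup
  apply Set.eq_of_subset_of_subset
  · rintro _ ⟨j, rfl⟩
    by_cases hj : j ∈ Set.range σ
    · obtain ⟨i, rfl⟩ := hj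
      refine ⟨i, ?_⟩
      show |x i| = |Finsupp.embDomain emb x (emb i)|
      rw [Finsupp.embDomain_apply_self emb x i]
    · obtain ⟨i0, hi0⟩ := Infinite.exists_notMem_finset x.support
      refine ⟨i0, ?_⟩
      rw [Finsupp.notMem_support_iff] at hi0
      show |x i0| = |Finsupp.embDomain emb x j|
      rw [hi0, Finsupp.embDomain_notin_range emb x j hj]
  · rintro _ ⟨i, rfl⟩
    refine ⟨σ i, ?_⟩
    show |Finsupp.embDomain emb x (emb i)| = |x i|
    rw [Finsupp.embDomain_apply_self emb x i]

lemma restr_map_embDomain (hσ : StrictMono σ) (E : Finset ℕ) (x : ℕ →₀ ℝ) :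
    restr ↑(E.map ⟨σ, hσ.injective⟩) (Finsupp.embDomain ⟨σ, hσ.injective⟩ x)
      = Finsupp.embDomain ⟨σ, hσ.injective⟩ (restr ↑E x) := by
  set emb : ℕ ↪ ℕ := ⟨σ, hσ.injective⟩
  ext j
  by_cases hj : j ∈ Set.range σ
  · obtain ⟨i, rfl⟩ := hj
    rw [show σ i = emb i from rfl, Finsupp.embDomain_apply_self emb (restr ↑E x) i]
    by_cases hi : i ∈ E
    · have hmem : emb i ∈ (↑(E.map emb) : Set ℕ) := by
        simp only [Finset.coe_map, Set.mem_image, Finset.mem_coe]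
        exact ⟨i, hi, rfl⟩
      rw [restr_apply_pos _ hmem, Finsupp.embDomain_apply_self emb x i,
        restr_apply_pos _ (by exact_mod_cast hi)]
    · have hmem : emb i ∉ (↑(E.map emb) : Set ℕ) := by
        simp only [Finset.coe_map, Set.mem_image, Finset.mem_coe]
        rintro ⟨i', hi', heq⟩
        exact hi (hσ.injective heq ▸ hi')
      rw [restr_apply_neg _ hmem, restr_apply_neg _ (by exact_mod_cast hi)]
  · have hj' : j ∉ (↑(E.map emb) : Set ℕ) := by
      simp only [Finset.coe_map, Set.mem_image, Finset.mem_coe]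
      rintro ⟨i', _, heq⟩
      exact hj ⟨i', heq⟩
    rw [restr_apply_neg _ hj', Finsupp.embDomain_notin_range emb _ j hj]

lemma restr_preimage_embDomain (hσ : StrictMono σ) (F : Finset ℕ) (x : ℕ →₀ ℝ) :
    restr ↑F (Finsupp.embDomain ⟨σ, hσ.injective⟩ x)
      = Finsupp.embDomain ⟨σ, hσ.injective⟩
          (restr ↑(F.preimage σ (hσ.injective.injOn)) x) := by
  set emb : ℕ ↪ ℕ := ⟨σ, hσ.injective⟩
  ext j
  by_cases hj : j ∈ Set.range σ
  · obtain ⟨i, rfl⟩ := hj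
    rw [show σ i = emb i from rfl, Finsupp.embDomain_apply_self emb _ i]
    by_cases hi : σ i ∈ F
    · rw [restr_apply_pos _ (show emb i ∈ (↑F : Set ℕ) from hi),
        Finsupp.embDomain_apply_self emb x i,
        restr_apply_pos _ (show i ∈ (↑(F.preimage σ hσ.injective.injOn) : Set ℕ) by
          exact_mod_cast Finset.mem_preimage.mpr hi)]
    · rw [restr_apply_neg _ (show emb i ∉ (↑F : Set ℕ) from hi),
        restr_apply_neg _ (show i ∉ (↑(F.preimage σ hσ.injective.injOn) : Set ℕ) by
          intro hc
          exact hi (Finset.mem_preimage.mp (by exact_mod_cast hc)))]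
  · have h0 : Finsupp.embDomain emb x j = 0 := Finsupp.embDomain_notin_range emb x j hj
    rw [Finsupp.embDomain_notin_range emb _ j hj]
    by_cases hjF : j ∈ (↑F : Set ℕ)
    · rw [restr_apply_pos _ hjF, h0]
    · rw [restr_apply_neg _ hjF]

lemma IsSNorm.embDomain_eq {N : (ℕ →₀ ℝ) → ℝ} (h : IsSNorm N) (hσ : StrictMono σ)
    (x : ℕ →₀ ℝ) : N (Finsupp.embDomain ⟨σ, hσ.injective⟩ x) = N x := by
  set emb : ℕ ↪ ℕ := ⟨σ, hσ.injective⟩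
  suffices hkey : ∀ k x, (x : ℕ →₀ ℝ).support.card = k → N (Finsupp.embDomain emb x) = N x by
    exact hkey _ x rfl
  intro k
  induction k using Nat.strong_induction_on with
  | _ k IH =>
  intro x hcard
  subst hcard
  rcases eq_or_ne x 0 with rfl | hx
  · rw [Finsupp.embDomain_zero]
  · have hinj := Finsupp.embDomain_injective (M := ℝ) emb
    have hex : Finsupp.embDomain emb x ≠ 0 := by
      intro hc
      exact hx (hinj (by rw [hc, Finsupp.embDomain_zero]))
    rw [h.eq_Tset hex, h.eq_Tset hx, supNorm_embDomain hσ]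
    congr 2
    apply Set.eq_of_subset_of_subset
    · -- Tset for embDomain x ⊆ Tset for x : use preimages
      rintro c ⟨n, F, hn, hF, hprop, rfl⟩
      set G : ℕ → Finset ℕ := fun j => (F j).preimage σ (hσ.injective.injOn) with hG
      have hcorr : ∀ j, restr ↑(F j) (Finsupp.embDomain emb x)
          = Finsupp.embDomain emb (restr ↑(G j) x) :=
        fun j => restr_preimage_embDomain hσ (F j) x
      have hGlt : ∀ i j, 1 ≤ i → i < j → j ≤ n → FinsetLt (G i) (G j) := by
        intro i j h1 h2 h3 a ha b hb
        rw [hG] at ha hb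
        simp only [Finset.mem_preimage] at ha hb
        exact hσ.lt_iff_lt.mp (hF i j h1 h2 h3 _ ha _ hb)
      have hGprop : ∀ j ∈ Finset.Icc 1 n, restr ↑(G j) x ≠ x := by
        intro j hj hc
        apply hprop j hj
        rw [hcorr j, hc]
      refine ⟨n, G, hn, hGlt, hGprop, ?_⟩
      congr 1
      apply Finset.sum_congr rfl
      intro j hj
      rw [hcorr j]
      exact IH _ (restr_proper_card (hGprop j hj)) _ rfl
    · -- Tset for x ⊆ Tset for embDomain x : use images
      rintro c ⟨n, E, hn, hE, hprop, rfl⟩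
      set G : ℕ → Finset ℕ := fun j => (E j).map emb with hG
      have hcorr : ∀ j, restr ↑(G j) (Finsupp.embDomain emb x)
          = Finsupp.embDomain emb (restr ↑(E j) x) :=
        fun j => restr_map_embDomain hσ (E j) x
      have hGlt : ∀ i j, 1 ≤ i → i < j → j ≤ n → FinsetLt (G i) (G j) := by
        intro i j h1 h2 h3 a ha b hb
        rw [hG] at ha hb
        simp only [Finset.mem_map] at ha hb
        obtain ⟨a', ha', rfl⟩ := ha
        obtain ⟨b', hb', rfl⟩ := hb
        exact hσ (hE i j h1 h2 h3 _ ha' _ hb')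
      have hGprop : ∀ j ∈ Finset.Icc 1 n, restr ↑(G j) (Finsupp.embDomain emb x)
          ≠ Finsupp.embDomain emb x := by
        intro j hj hc
        rw [hcorr j] at hc
        exact hprop j hj (hinj hc)
      refine ⟨n, G, hn, hGlt, hGprop, ?_⟩
      congr 1
      apply Finset.sum_congr rfl
      intro j hj
      rw [hcorr j]
      exact (IH _ (restr_proper_card (hprop j hj)) _ rfl).symm
  done

end Spread

-- chunk 7: final assembly
lemma apply_sum_single (g : ℕ → ℝ) (k i : ℕ) :
    (∑ j ∈ Finset.range k, Finsupp.single j (g j)) i = if i < k then g i else 0 := by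
  rw [Finsupp.finset_sum_apply]
  have : ∀ j ∈ Finset.range k, Finsupp.single j (g j) i = if j = i then g j else 0 := by
    intro j _
    rw [Finsupp.single_apply]
  rw [Finset.sum_congr rfl this, Finset.sum_ite_eq' (Finset.range k) i g]
  simp [Finset.mem_range]

lemma embDomain_sum_single (σ : ℕ → ℕ) (hσ : StrictMono σ) (g : ℕ → ℝ) (k : ℕ) :
    Finsupp.embDomain ⟨σ, hσ.injective⟩ (∑ i ∈ Finset.range k, Finsupp.single i (g i))
      = ∑ i ∈ Finset.range k, g i • Finsupp.single (σ i) (1 : ℝ) := by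
  set emb : ℕ ↪ ℕ := ⟨σ, hσ.injective⟩
  rw [show Finsupp.embDomain emb (∑ i ∈ Finset.range k, Finsupp.single i (g i))
      = Finsupp.embDomain.addMonoidHom emb (∑ i ∈ Finset.range k, Finsupp.single i (g i)) from rfl,
    map_sum]
  apply Finset.sum_congr rfl
  intro i _
  show Finsupp.embDomain emb (Finsupp.single i (g i)) = g i • Finsupp.single (σ i) (1 : ℝ)
  rw [Finsupp.embDomain_single, Finsupp.smul_single', mul_one]
  rfl


/-- There is a unique norm on `c₀₀` satisfying the implicit equation, and for this
norm the unit vector basis is 1-unconditional and 1-subsymmetric. -/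
theorem statement0 :
    (∃! N : (ℕ →₀ ℝ) → ℝ, IsSNorm N) ∧
    (∀ N : (ℕ →₀ ℝ) → ℝ, IsSNorm N →
      ∀ (k : ℕ) (lam θ : ℕ → ℝ) (n m : ℕ → ℕ),
        (∀ i, θ i = 1 ∨ θ i = -1) → StrictMono n → StrictMono m →
        N (∑ i ∈ Finset.range k, lam i • Finsupp.single (n i) (1 : ℝ)) =
          N (∑ i ∈ Finset.range k, (θ i * lam i) • Finsupp.single (m i) (1 : ℝ))) := by
  constructor
  · exact ⟨Snorm, isSNorm_Snorm, fun N hN => isSNorm_unique hN isSNorm_Snorm⟩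
  · intro N hN k lam θ n m hθ hn hm
    set x₀ := ∑ i ∈ Finset.range k, Finsupp.single i (lam i) with hx₀
    set x₁ := ∑ i ∈ Finset.range k, Finsupp.single i (θ i * lam i) with hx₁
    have h1 : ∑ i ∈ Finset.range k, lam i • Finsupp.single (n i) (1 : ℝ)
        = Finsupp.embDomain ⟨n, hn.injective⟩ x₀ := (embDomain_sum_single n hn lam k).symm
    have h2 : ∑ i ∈ Finset.range k, (θ i * lam i) • Finsupp.single (m i) (1 : ℝ)
        = Finsupp.embDomain ⟨m, hm.injective⟩ x₁ :=
      (embDomain_sum_single m hm (fun i => θ i * lam i) k).symm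
    have h3 : x₁ = emul θ x₀ := by
      ext i
      rw [emul_apply, hx₀, hx₁, apply_sum_single, apply_sum_single]
      split_ifs
      · rfl
      · rw [mul_zero]
    rw [h1, h2, hN.embDomain_eq hn, hN.embDomain_eq hm, h3, hN.emul_eq hθ]
end

section
/- The function G(r) is nondecreasing in r > 1: if 1 < r ≤ r′ then G(r) ≤ G(r′). -/
open Finset Filter Topology

/-- The growth conditions (2.12) and (2.13) on the sequence `(k_i)_{i ≥ 1}`. -/
def kGood (k : ℕ → ℕ) : Prop :=
  (∀ i, 1 ≤ i → k i < k (i + 1)) ∧ (∀ i, 1 ≤ i → 1 ≤ k i) ∧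
  (1 : ℝ) ≤ (2 / 3 : ℝ) * flog ((3 / 4 : ℝ) * flog (k 1)) ∧
  (3 : ℝ) ≤ Real.log (k 1) ∧
  (∀ r a : ℝ, (k 1 : ℝ) < r → 1 < a → (3 / 4 : ℝ) * a * flog r ≤ flog (r ^ a))

/-- `G(r) = max_{i ≥ 1} [f(r)f(k_i)/f(r k_i)] ∏_{j=1}^{i-1} f(k_j)/k_j`. -/
noncomputable def Gfun (k : ℕ → ℕ) (r : ℝ) : ℝ :=
  sSup { c | ∃ i : ℕ, 1 ≤ i ∧
    c = flog r * flog (k i) / flog (r * (k i)) * ∏ j ∈ Finset.Ico 1 i, flog (k j) / (k j) }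

lemma key_ineq (m x : ℝ) (hm : 1 ≤ m) (hx : 1 ≤ x) :
    m * (x+1) * Real.log (x+1) ≤ (m*x+1) * Real.log (m*x+1) := by
  have h1 : (0:ℝ) < x + 1 := by linarith
  have h3 : (0:ℝ) < m*x+1 := by nlinarith
  have hlog1 : Real.log (x+1) ≤ x := by
    have := Real.log_le_sub_one_of_pos h1; linarith
  have hlog2 : Real.log ((x+1)/(m*x+1)) ≤ (x+1)/(m*x+1) - 1 :=
    Real.log_le_sub_one_of_pos (by positivity)
  rw [Real.log_div h1.ne' h3.ne'] at hlog2
  have h4 : (m*x+1) * (Real.log (x+1) - Real.log (m*x+1)) ≤ (x+1) - (m*x+1) := by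
    have h5 := mul_le_mul_of_nonneg_left hlog2 h3.le
    have e : (m*x+1)*((x+1)/(m*x+1) - 1) = (x+1)-(m*x+1) := by field_simp
    linarith [e ▸ h5]
  nlinarith [mul_le_mul_of_nonneg_left hlog1 (show (0:ℝ) ≤ m-1 by linarith)]

lemma hMono (m : ℝ) (hm : 1 ≤ m) :
    MonotoneOn (fun x => Real.log (x+1) / Real.log (m*x+1)) (Set.Ici 1) := by
  have hm0 : (0:ℝ) < m := by linarith
  have hderiv : ∀ x : ℝ, 1 ≤ x → HasDerivAt (fun y => Real.log (y+1) / Real.log (m*y+1))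
      (((x+1)⁻¹ * Real.log (m*x+1) - Real.log (x+1) * ((m*x+1)⁻¹ * m)) / (Real.log (m*x+1))^2) x := by
    intro x hx
    have h1 : (0:ℝ) < x + 1 := by linarith
    have h3 : (1:ℝ) < m*x+1 := by nlinarith
    have hlogne : Real.log (m*x+1) ≠ 0 := (Real.log_pos h3).ne'
    have hu : HasDerivAt (fun y : ℝ => Real.log (y+1)) ((x+1)⁻¹) x := by
      simpa [Function.comp_def] using (Real.hasDerivAt_log h1.ne').comp x ((hasDerivAt_id x).add_const 1)
    have hv : HasDerivAt (fun y : ℝ => Real.log (m*y+1)) ((m*x+1)⁻¹ * m) x := by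
      have hin : HasDerivAt (fun y : ℝ => m*y+1) m x := by
        simpa using ((hasDerivAt_id x).const_mul m).add_const 1
      simpa [Function.comp_def] using (Real.hasDerivAt_log (by linarith : m*x+1 ≠ 0)).comp x hin
    exact hu.div hv hlogne
  apply monotoneOn_of_deriv_nonneg (convex_Ici 1)
  · intro x hx
    exact ((hderiv x hx).continuousAt).continuousWithinAt
  · intro x hx
    rw [interior_Ici] at hx
    have hx1 : (1:ℝ) < x := hx
    exact (hderiv x hx1.le).differentiableAt.differentiableWithinAt
  · intro x hx
    rw [interior_Ici] at hx
    have hx1 : (1:ℝ) < x := hx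
    rw [(hderiv x hx1.le).deriv]
    have h1 : (0:ℝ) < x + 1 := by linarith
    have h3 : (0:ℝ) < m*x+1 := by nlinarith
    apply div_nonneg _ (sq_nonneg _)
    rw [sub_nonneg]
    have key := key_ineq m x hm hx1.le
    have e1 : Real.log (x+1) * ((m*x+1)⁻¹ * m) = (m*(x+1)*Real.log (x+1))/((x+1)*(m*x+1)) := by
      field_simp
    have e2 : (x+1)⁻¹ * Real.log (m*x+1) = ((m*x+1)*Real.log (m*x+1))/((x+1)*(m*x+1)) := by
      field_simp
    rw [e1, e2]
    gcongr

lemma flog_nonneg {x : ℝ} (hx : 0 ≤ x) : 0 ≤ flog x :=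
  Real.logb_nonneg one_lt_two (by linarith)

lemma flog_pos_s5 {x : ℝ} (hx : 0 < x) : 0 < flog x :=
  Real.logb_pos one_lt_two (by linarith)

lemma flog_le_flog_s5 {x y : ℝ} (hx : 0 ≤ x) (h : x ≤ y) : flog x ≤ flog y :=
  Real.logb_le_logb_of_le one_lt_two (by linarith) (by linarith)

lemma flog_nat_le (n : ℕ) (hn : 1 ≤ n) : flog n ≤ n := by
  unfold flog
  rw [Real.logb_le_iff_le_rpow one_lt_two (by positivity)]
  rw [Real.rpow_natCast]
  exact_mod_cast Nat.succ_le_of_lt (Nat.lt_two_pow_self (n := n))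

lemma term_eq (m : ℝ) (hm : 1 ≤ m) {s : ℝ} (hs : 1 < s) :
    flog s * flog m / flog (s*m) = flog m * (Real.log (s+1) / Real.log (m*s+1)) := by
  have h3 : (1:ℝ) < m*s+1 := by nlinarith
  have hlogne : Real.log (m*s+1) ≠ 0 := (Real.log_pos h3).ne'
  have hlog2 : Real.log 2 ≠ 0 := (Real.log_pos one_lt_two).ne'
  unfold flog Real.logb
  rw [mul_comm s m]
  field_simp

lemma termMono (m : ℝ) (hm : 1 ≤ m) {r r' : ℝ} (hr : 1 < r) (hrr' : r ≤ r') :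
    flog r * flog m / flog (r*m) ≤ flog r' * flog m / flog (r'*m) := by
  have hr' : 1 < r' := lt_of_lt_of_le hr hrr'
  rw [term_eq m hm hr, term_eq m hm hr']
  exact mul_le_mul_of_nonneg_left
    (hMono m hm (Set.mem_Ici.mpr hr.le) (Set.mem_Ici.mpr hr'.le) hrr')
    (flog_nonneg (by linarith))

lemma term_le_flog (m s : ℝ) (hm : 1 ≤ m) (hs : 1 < s) :
    flog s * flog m / flog (s*m) ≤ flog s := by
  have h1 : 0 < flog (s*m) := flog_pos_s5 (by nlinarith)
  have h2 : flog m ≤ flog (s*m) := flog_le_flog_s5 (by linarith) (by nlinarith)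
  rw [mul_div_assoc]
  calc flog s * (flog m / flog (s*m)) ≤ flog s * 1 :=
        mul_le_mul_of_nonneg_left ((div_le_one h1).mpr h2) (flog_nonneg (by linarith))
    _ = flog s := mul_one _

lemma term_nonneg (m s : ℝ) (hm : 1 ≤ m) (hs : 1 < s) :
    0 ≤ flog s * flog m / flog (s*m) :=
  div_nonneg (mul_nonneg (flog_nonneg (by linarith)) (flog_nonneg (by linarith)))
    (flog_nonneg (by nlinarith))

/-- Proposition 2.3 (a): `G` is nondecreasing on `(1,∞)`. -/
theorem statement5 (k : ℕ → ℕ) (hk : kGood k) :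
    ∀ r r' : ℝ, 1 < r → r ≤ r' → Gfun k r ≤ Gfun k r' := by
  obtain ⟨-, hk1, -, -, -⟩ := hk
  intro r r' hr hrr'
  have hr' : 1 < r' := lt_of_lt_of_le hr hrr'
  have hcast : ∀ i, 1 ≤ i → (1:ℝ) ≤ (k i : ℝ) := by
    intro i hi; exact_mod_cast hk1 i hi
  have hprod_nonneg : ∀ i : ℕ, (0:ℝ) ≤ ∏ j ∈ Finset.Ico 1 i, flog (k j) / (k j) := by
    intro i
    apply Finset.prod_nonneg
    intro j hj
    have hj1 : 1 ≤ j := (Finset.mem_Ico.mp hj).1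
    have := hcast j hj1
    exact div_nonneg (flog_nonneg (by linarith)) (by linarith)
  have hprod_le_one : ∀ i : ℕ, (∏ j ∈ Finset.Ico 1 i, flog (k j) / (k j)) ≤ 1 := by
    intro i
    apply Finset.prod_le_one
    · intro j hj
      have hj1 : 1 ≤ j := (Finset.mem_Ico.mp hj).1
      have := hcast j hj1
      exact div_nonneg (flog_nonneg (by linarith)) (by linarith)
    · intro j hj
      have hj1 : 1 ≤ j := (Finset.mem_Ico.mp hj).1
      have h1 := hcast j hj1
      rw [div_le_one (by linarith)]
      exact flog_nat_le (k j) (hk1 j hj1)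
  have hbdd : ∀ s : ℝ, 1 < s → BddAbove { c | ∃ i : ℕ, 1 ≤ i ∧
      c = flog s * flog (k i) / flog (s * (k i)) * ∏ j ∈ Finset.Ico 1 i, flog (k j) / (k j) } := by
    intro s hs
    refine ⟨flog s, ?_⟩
    rintro c ⟨i, hi, rfl⟩
    have hm := hcast i hi
    calc flog s * flog (k i) / flog (s * (k i)) * ∏ j ∈ Finset.Ico 1 i, flog (k j) / (k j)
        ≤ flog s * flog (k i) / flog (s * (k i)) * 1 :=
          mul_le_mul_of_nonneg_left (hprod_le_one i) (term_nonneg _ s hm hs)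
      _ = flog s * flog (k i) / flog (s * (k i)) := mul_one _
      _ ≤ flog s := term_le_flog _ s hm hs
  unfold Gfun
  have hne : Set.Nonempty { c | ∃ i : ℕ, 1 ≤ i ∧
      c = flog r * flog (k i) / flog (r * (k i)) * ∏ j ∈ Finset.Ico 1 i, flog (k j) / (k j) } :=
    ⟨flog r * flog (k 1) / flog (r * (k 1)) * ∏ j ∈ Finset.Ico 1 1, flog (k j) / (k j),
      1, le_refl 1, rfl⟩
  apply csSup_le hne
  rintro c ⟨i, hi, rfl⟩
  have hm := hcast i hi
  have step1 : flog r * flog (k i) / flog (r * (k i)) * ∏ j ∈ Finset.Ico 1 i, flog (k j) / (k j)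
      ≤ flog r' * flog (k i) / flog (r' * (k i)) * ∏ j ∈ Finset.Ico 1 i, flog (k j) / (k j) :=
    mul_le_mul_of_nonneg_right (termMono _ hm hr hrr') (hprod_nonneg i)
  exact step1.trans (le_csSup (hbdd r' hr') ⟨i, hi, rfl⟩)
end

section
/- Let f(x) = log₂(x+1) and let a ≥ 1 satisfy ln a ≥ 3. Then the function x ↦ f(x)/f(a·x) is nondecreasing on [1, ∞); equivalently, for every x ≥ 1 one has ln(1+ax)/(1+x) − a·ln(1+x)/(1+ax) ≥ 0. -/
open Finset Filter Topology

lemma key_ineq_s12 (a : ℝ) (ha : 1 ≤ a) (ha' : 3 ≤ Real.log a) (x : ℝ) (hx : 1 ≤ x) :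
    0 ≤ Real.log (1 + a * x) / (1 + x) - a * Real.log (1 + x) / (1 + a * x) := by
  have hp : (0:ℝ) < 1 + x := by linarith
  have hq : (0:ℝ) < 1 + a * x := by nlinarith
  have hae : Real.exp 3 ≤ a := by
    have h := Real.exp_log (by linarith : (0:ℝ) < a)
    calc Real.exp 3 ≤ Real.exp (Real.log a) := Real.exp_le_exp.2 ha'
      _ = a := h
  have he2 : (2:ℝ) ≤ Real.exp 1 := by
    have := Real.add_one_le_exp 1; linarith
  have h3 : Real.exp 3 = Real.exp 1 * Real.exp 1 * Real.exp 1 := by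
    rw [← Real.exp_add, ← Real.exp_add]; norm_num
  have hE : Real.exp 1 * (1 + x) ≤ 1 + a * x := by
    have hax : Real.exp 3 * x ≤ a * x :=
      mul_le_mul_of_nonneg_right hae (by linarith)
    have he3 : Real.exp 1 ≤ 3 := by
      have := Real.exp_one_lt_d9; linarith
    have h4 : 4 * Real.exp 1 ≤ Real.exp 3 := by
      nlinarith [Real.exp_pos 1]
    have h4x : 4 * Real.exp 1 * x ≤ Real.exp 3 * x :=
      mul_le_mul_of_nonneg_right h4 (by linarith)
    nlinarith [Real.exp_pos 1, mul_le_mul_of_nonneg_right he2 (by linarith : (0:ℝ) ≤ x)]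
  have hlog1 : 1 + Real.log (1 + x) ≤ Real.log (1 + a * x) := by
    have h := Real.log_le_log (by positivity : (0:ℝ) < Real.exp 1 * (1 + x)) hE
    rwa [Real.log_mul (Real.exp_ne_zero 1) (by linarith), Real.log_exp] at h
  have hlx : Real.log (1 + x) ≤ x := by
    have := Real.log_le_sub_one_of_pos hp; linarith
  have hlxpos : 0 ≤ Real.log (1 + x) := Real.log_nonneg (by linarith)
  have hnum : 0 ≤ (1 + a*x) * Real.log (1+a*x) - a * (1+x) * Real.log (1+x) := by
    nlinarith [mul_le_mul_of_nonneg_left hlog1 hq.le,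
      mul_le_mul_of_nonneg_left hlx (by linarith : (0:ℝ) ≤ a - 1)]
  have heq : Real.log (1 + a * x) / (1 + x) - a * Real.log (1 + x) / (1 + a * x)
      = ((1 + a*x) * Real.log (1+a*x) - a * (1+x) * Real.log (1+x)) / ((1+x) * (1+a*x)) := by
    field_simp
  rw [heq]
  exact div_nonneg hnum (by positivity)

/-- For `a ≥ 1` with `ln a ≥ 3`, the function `x ↦ f(x)/f(ax)` is nondecreasing on
`[1,∞)`; equivalently `ln(1+ax)/(1+x) - a ln(1+x)/(1+ax) ≥ 0` for `x ≥ 1`. -/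
theorem statement12 (a : ℝ) (ha : 1 ≤ a) (ha' : 3 ≤ Real.log a) :
    MonotoneOn (fun x : ℝ => flog x / flog (a * x)) (Set.Ici 1) ∧
    ∀ x : ℝ, 1 ≤ x →
      0 ≤ Real.log (1 + a * x) / (1 + x) - a * Real.log (1 + x) / (1 + a * x) := by
  refine ⟨?_, fun x hx => key_ineq_s12 a ha ha' x hx⟩
  have hlog2 : Real.log 2 ≠ 0 := ne_of_gt (Real.log_pos (by norm_num))
  have hfg : (fun x : ℝ => flog x / flog (a * x))
      = fun x : ℝ => Real.log (x + 1) / Real.log (a * x + 1) := by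
    funext x
    simp only [flog, Real.logb]
    rw [div_div_div_comm, div_self hlog2, div_one]
  rw [hfg]
  set g : ℝ → ℝ := fun x => Real.log (x + 1) / Real.log (a * x + 1) with hg
  have hderiv : ∀ x : ℝ, 1 ≤ x → HasDerivAt g
      ((1/(x+1) * Real.log (a*x+1) - Real.log (x+1) * (a/(a*x+1))) / (Real.log (a*x+1))^2) x := by
    intro x hx
    have hx1 : x + 1 ≠ 0 := by linarith
    have hax1 : a * x + 1 ≠ 0 := by nlinarith
    have h1 : HasDerivAt (fun y : ℝ => Real.log (y + 1)) (1/(x+1)) x := by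
      have := (Real.hasDerivAt_log hx1).comp x ((hasDerivAt_id x).add_const 1)
      simpa [one_div, Function.comp_def] using this
    have h2 : HasDerivAt (fun y : ℝ => Real.log (a * y + 1)) (a/(a*x+1)) x := by
      have hi : HasDerivAt (fun y : ℝ => a * y + 1) a x := by
        simpa using ((hasDerivAt_id x).const_mul a).add_const 1
      have := (Real.hasDerivAt_log hax1).comp x hi
      simpa [div_eq_inv_mul, Function.comp_def] using this
    have hden : Real.log (a * x + 1) ≠ 0 :=
      ne_of_gt (Real.log_pos (by nlinarith))
    exact h1.div h2 hden
  have hderiv_nonneg : ∀ x : ℝ, 1 ≤ x →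
      0 ≤ (1/(x+1) * Real.log (a*x+1) - Real.log (x+1) * (a/(a*x+1))) / (Real.log (a*x+1))^2 := by
    intro x hx
    apply div_nonneg _ (sq_nonneg _)
    have hk := key_ineq_s12 a ha ha' x hx
    have e1 : a * x + 1 = 1 + a * x := by ring
    have e2 : x + 1 = 1 + x := by ring
    rw [e1, e2]
    have : 1/(1+x) * Real.log (1+a*x) - Real.log (1+x) * (a/(1+a*x))
        = Real.log (1 + a * x) / (1 + x) - a * Real.log (1 + x) / (1 + a * x) := by ring
    linarith [hk, this.ge, this.le]
  apply monotoneOn_of_deriv_nonneg (convex_Ici 1)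
  · exact fun x hx => ((hderiv x hx).continuousAt).continuousWithinAt
  · intro x hx
    rw [interior_Ici] at hx
    exact ((hderiv x hx.le).differentiableAt).differentiableWithinAt
  · intro x hx
    rw [interior_Ici] at hx
    rw [(hderiv x hx.le).deriv]
    exact hderiv_nonneg x hx.le
end

section
/- Let X be an infinite-dimensional Banach space which is complementably minimal, i.e. every infinite-dimensional closed subspace of X contains a further closed subspace Z which is isomorphic to X and complemented in X. Let T : X → X be a bounded linear operator which is not strictly singular. Then there exist bounded linear operators A, B : X → X such that A∘T∘B = id_X. -/
open Finset Filter Topology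

/-- A bounded operator is strictly singular if its restriction to no
infinite-dimensional closed subspace is an isomorphism onto its image;
equivalently, on every infinite-dimensional closed subspace it almost
vanishes in norm. -/
def StrictlySingular {X Y : Type*} [NormedAddCommGroup X] [NormedSpace ℝ X]
    [NormedAddCommGroup Y] [NormedSpace ℝ Y] (T : X →L[ℝ] Y) : Prop :=
  ∀ Z : Submodule ℝ X, IsClosed (Z : Set X) → ¬ FiniteDimensional ℝ Z →
    ∀ c : ℝ, 0 < c → ∃ z ∈ Z, ‖T z‖ < c * ‖z‖

/-- If `X` is an infinite-dimensional complementably minimal Banach space and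
`T : X → X` is a bounded operator that is not strictly singular, then the identity
of `X` factors through `T`: there are bounded operators `A, B` with `A ∘ T ∘ B = id`. -/
theorem statement18 (X : Type*) [NormedAddCommGroup X] [NormedSpace ℝ X]
    [CompleteSpace X] (hinf : ¬ FiniteDimensional ℝ X)
    (hmin : ∀ Y : Submodule ℝ X, IsClosed (Y : Set X) → ¬ FiniteDimensional ℝ Y →
      ∃ Z : Submodule ℝ X, Z ≤ Y ∧ IsClosed (Z : Set X) ∧
        Nonempty (X ≃L[ℝ] Z) ∧ Z.ClosedComplemented)
    (T : X →L[ℝ] X) (hT : ¬ StrictlySingular T) :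
    ∃ A B : X →L[ℝ] X, A.comp (T.comp B) = ContinuousLinearMap.id ℝ X := by
  unfold StrictlySingular at hT
  push_neg at hT
  obtain ⟨Z₀, hZ₀c, hZ₀fd, c, hc, hbound⟩ := hT
  haveI : CompleteSpace Z₀ := hZ₀c.completeSpace_coe
  set f : Z₀ →L[ℝ] X := T.comp Z₀.subtypeL with hf_def
  have hbd : ∀ z : Z₀, ‖z‖ ≤ (⟨c⁻¹, (inv_pos.mpr hc).le⟩ : NNReal) * ‖f z‖ := by
    intro z
    have hb := hbound (z : X) z.2
    show ‖z‖ ≤ c⁻¹ * ‖f z‖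
    rw [inv_mul_eq_div, le_div_iff₀ hc, mul_comm]
    exact hb
  have hanti := f.antilipschitz_of_bound hbd
  have hinj : Function.Injective f := hanti.injective
  have hclosed : IsClosed (Set.range f) :=
    (hanti.isClosedEmbedding f.uniformContinuous).isClosed_range
  set R : Submodule ℝ X := LinearMap.range (f : Z₀ →ₗ[ℝ] X) with hR_def
  have hRclosed : IsClosed (R : Set X) := by
    have : (R : Set X) = Set.range f := LinearMap.coe_range _
    rw [this]; exact hclosed
  haveI : CompleteSpace R := hRclosed.completeSpace_coe
  -- the corestriction is a continuous linear equiv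
  set f' : Z₀ →L[ℝ] R := f.codRestrict R (fun z => LinearMap.mem_range_self _ z) with hf'_def
  have hker : LinearMap.ker (f' : Z₀ →ₗ[ℝ] R) = ⊥ := by
    ext z
    simp only [LinearMap.mem_ker, Submodule.mem_bot]
    constructor
    · intro h
      apply hinj
      have h2 := congrArg (Subtype.val) h
      simpa [hf'_def] using h2
    · rintro rfl
      simp
  have hrange : LinearMap.range (f' : Z₀ →ₗ[ℝ] R) = ⊤ := by
    rw [LinearMap.range_eq_top]
    rintro ⟨w, hw⟩
    obtain ⟨z, hz⟩ := hw
    exact ⟨z, Subtype.ext hz⟩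
  let g : Z₀ ≃L[ℝ] R := ContinuousLinearEquiv.ofBijective f' hker hrange
  have hRfd : ¬ FiniteDimensional ℝ R := by
    intro h
    exact hZ₀fd (FiniteDimensional.of_injective (f'.toLinearMap) (by
      rw [← LinearMap.ker_eq_bot]; exact hker))
  obtain ⟨Z, hZR, hZclosed, ⟨e⟩, ⟨p, hp⟩⟩ := hmin R hRclosed hRfd
  -- inclusion Z →L R
  let j : Z →L[ℝ] R := Z.subtypeL.codRestrict R (fun z => hZR z.2)
  let B : X →L[ℝ] X := Z₀.subtypeL.comp ((g.symm : R →L[ℝ] Z₀).comp (j.comp (e : X →L[ℝ] Z)))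
  let A : X →L[ℝ] X := (e.symm : Z →L[ℝ] X).comp p
  refine ⟨A, B, ?_⟩
  ext x
  have key : T (B x) = ((j (e x) : R) : X) := by
    have h1 : g (g.symm (j (e x))) = j (e x) := g.apply_symm_apply _
    have h2 : g (g.symm (j (e x))) = f' (g.symm (j (e x))) := by
      rw [ContinuousLinearEquiv.coeFn_ofBijective f' hker hrange]
    calc T (B x) = ((f' (g.symm (j (e x))) : R) : X) := rfl
    _ = ((g (g.symm (j (e x))) : R) : X) := by rw [h2]
    _ = _ := by rw [h1]
  have hjx : ((j (e x) : R) : X) = ((e x : Z) : X) := rfl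
  simp only [ContinuousLinearMap.comp_apply, ContinuousLinearMap.id_apply, A]
  rw [key, hjx]
  have := hp (e x)
  -- p ↑(e x) = e x, but coercion Z → X vs ...
  rw [show p ((e x : Z) : X) = e x from hp (e x)]
  simp
end
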